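/- arXiv:2603.08963 — 2 statements merged into one kernel-verified Lean document; each statement's English description precedes it below -/
import Mathlib

section
/- (Proportionality of plug-in scores under a correct outcome model.) For arbitrary fixed plug-in functions π̃(·) ∈ (0,1) and p̃_1(·), but with the true outcome regression μ_{10}, define ψ̃_{1,1−S}(W) = [1(Z=1)/π̃(X)]·{(1−S) − (1−p̃_1(X))} + (1−p̃_1(X)) and ψ̃_{1,Y(1−S)}(W) = [1(Z=1)/π̃(X)]·{Y(1−S) − μ_{10}(X)(1−p̃_1(X))} + μ_{10}(X)(1−p̃_1(X)). Then for all x, E[ψ̃_{1,Y(1−S)}|X=x] = μ_{10}(x)·E[ψ̃_{1,1−S}|X=x], and moreover E[ψ̃_{1,1−S}|X=x] = (π(x)/π̃(x))(p̃_1(x)−p_1(x)) + 1 − p̃_1(x). -/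
open MeasureTheory Filter
open scoped Classical

noncomputable section

/-- Conditional mean of `f` given the event `A`: `E[f | A] = (∫_A f dP) / P(A)`. -/
def condMeanOn {Ω : Type*} [MeasurableSpace Ω] (P : Measure Ω) (A : Set Ω) (f : Ω → ℝ) : ℝ :=
  (∫ ω in A, f ω ∂P) / (P A).toReal

/-- Conditional probability of the event `A` given the event `B`: `P(A | B)`. -/
def condProbOn {Ω : Type*} [MeasurableSpace Ω] (P : Measure Ω) (A B : Set Ω) : ℝ :=
  (P (A ∩ B)).toReal / (P B).toReal

/-- Observed-cell outcome regression `μ_{zs}(x) = E(Y | Z = z, S = s, X = x)`. -/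
def muZS {Ω 𝓧 : Type*} [MeasurableSpace Ω] (P : Measure Ω) (X : Ω → 𝓧) (Z S Y : Ω → ℝ)
    (z s : ℝ) (x : 𝓧) : ℝ :=
  condMeanOn P {ω | Z ω = z ∧ S ω = s ∧ X ω = x} Y

/-- Propensity score `π(x) = P(Z = 1 | X = x)`. -/
def piX {Ω 𝓧 : Type*} [MeasurableSpace Ω] (P : Measure Ω) (X : Ω → 𝓧) (Z : Ω → ℝ)
    (x : 𝓧) : ℝ :=
  condProbOn P {ω | Z ω = 1} {ω | X ω = x}

/-- Principal score `p_z(x) = P(S = 1 | Z = z, X = x)`. -/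
def pZs {Ω 𝓧 : Type*} [MeasurableSpace Ω] (P : Measure Ω) (X : Ω → 𝓧) (Z S : Ω → ℝ)
    (z : ℝ) (x : 𝓧) : ℝ :=
  condProbOn P {ω | S ω = 1} {ω | Z ω = z ∧ X ω = x}

/-- Conditional principal causal effect
`τ^{(a,b)}(x) = E(Y(1) - Y(0) | S(1) = a, S(0) = b, X = x)`. -/
def tauPO {Ω 𝓧 : Type*} [MeasurableSpace Ω] (P : Measure Ω) (X : Ω → 𝓧)
    (S1 S0 Y1 Y0 : Ω → ℝ) (a b : ℝ) (x : 𝓧) : ℝ :=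
  condMeanOn P {ω | S1 ω = a ∧ S0 ω = b ∧ X ω = x} (fun ω => Y1 ω - Y0 ω)

/-- Plug-in augmented score for the arm `Z = 1`, with plug-in propensity `pit` and
plug-in conditional mean `m` of `f` given `(X, Z = 1)`. -/
def psiT1 {Ω 𝓧 : Type*} (X : Ω → 𝓧) (Z : Ω → ℝ) (pit : 𝓧 → ℝ) (f : Ω → ℝ)
    (m : 𝓧 → ℝ) : Ω → ℝ :=
  fun ω => (if Z ω = 1 then (1 : ℝ) else 0) / pit (X ω) * (f ω - m (X ω)) + m (X ω)

/-- Plug-in augmented score for the arm `Z = 0`. -/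
def psiT0 {Ω 𝓧 : Type*} (X : Ω → 𝓧) (Z : Ω → ℝ) (pit : 𝓧 → ℝ) (f : Ω → ℝ)
    (m : 𝓧 → ℝ) : Ω → ℝ :=
  fun ω => (if Z ω = 0 then (1 : ℝ) else 0) / (1 - pit (X ω)) * (f ω - m (X ω)) + m (X ω)

/-!
On the fibre `{X = x}` the plug-in functions are constants, so the conditional mean of a
plug-in score is `π̃(x)⁻¹ (E[1{Z=1} f | X = x] - m(x) π(x)) + m(x)`. Since `S` is binary,
`1{Z=1}(1 - S)` is the indicator of the cell `{Z = 1, S = 0}`, whose conditional probability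
factors as `π(x)(1 - p₁(x))`, and `1{Z=1} Y (1 - S)` has conditional mean `μ₁₀(x)` times that
probability. Both claims are then ring identities.
-/

open Set

lemma indicator_mul_one_sub_eq_indicator_inter {Ω : Type*} {S : Ω → ℝ}
    (hS : ∀ ω, S ω = 0 ∨ S ω = 1) (s : Set Ω) (g : Ω → ℝ) :
    s.indicator (fun ω => g ω * (1 - S ω)) = (s ∩ {ω | S ω = 0}).indicator g := by
  funext ω
  by_cases hs : ω ∈ s <;> rcases hS ω with h | h <;> simp [hs, h]

section CondMeanOn

variable {Ω : Type*} [MeasurableSpace Ω] {P : Measure Ω}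

lemma condMeanOn_indicator_one {A B : Set Ω} (hB : MeasurableSet B) :
    condMeanOn P A (B.indicator 1) = condProbOn P B A := by
  rw [condMeanOn, setIntegral_indicator hB, Pi.one_def, setIntegral_const, inter_comm,
    condProbOn, smul_eq_mul, mul_one, Measure.real]

variable [IsFiniteMeasure P]

lemma condMeanOn_indicator {A B : Set Ω} (hB : MeasurableSet B) (f : Ω → ℝ) :
    condMeanOn P A (B.indicator f) = condMeanOn P (B ∩ A) f * condProbOn P B A := by
  rw [condMeanOn, condMeanOn, condProbOn, setIntegral_indicator hB, inter_comm A B]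
  by_cases hBA : P (B ∩ A) = 0
  · simp [Measure.restrict_eq_zero.mpr hBA]
  · have : (P (B ∩ A)).toReal ≠ 0 := ENNReal.toReal_ne_zero.mpr ⟨hBA, measure_ne_top P _⟩
    field_simp

lemma condProbOn_inter (A B C : Set Ω) :
    condProbOn P (A ∩ B) C = condProbOn P B C * condProbOn P A (B ∩ C) := by
  rw [condProbOn, condProbOn, condProbOn, inter_assoc]
  by_cases hBC : P (B ∩ C) = 0
  · simp [measure_mono_null inter_subset_right hBC, hBC]
  · have : (P (B ∩ C)).toReal ≠ 0 := ENNReal.toReal_ne_zero.mpr ⟨hBC, measure_ne_top P _⟩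
    field_simp

lemma condProbOn_compl {A B : Set Ω} (hA : MeasurableSet A) (hB : P B ≠ 0) :
    condProbOn P Aᶜ B = 1 - condProbOn P A B := by
  have hB' : P.real B ≠ 0 := (measureReal_ne_zero_iff (measure_ne_top P B)).mpr hB
  have h_split := measureReal_inter_add_sdiff (μ := P) (s := B) hA
  rw [sdiff_eq, inter_comm B, inter_comm B] at h_split
  rw [condProbOn, condProbOn, eq_sub_iff_add_eq, ← add_div]
  exact (div_eq_one_iff_eq hB').mpr ((add_comm _ _).trans h_split)

variable {𝓧 : Type*} {X : Ω → 𝓧} {Z : Ω → ℝ} {x : 𝓧}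

lemma condMeanOn_psiT1 (pit : 𝓧 → ℝ) (f : Ω → ℝ) (m : 𝓧 → ℝ)
    (hX : MeasurableSet {ω | X ω = x}) (hZ : MeasurableSet {ω | Z ω = 1})
    (hf : IntegrableOn ({ω | Z ω = 1}.indicator f) {ω | X ω = x} P)
    (hPX : P {ω | X ω = x} ≠ 0) :
    condMeanOn P {ω | X ω = x} (psiT1 X Z pit f m)
      = (pit x)⁻¹ * (condMeanOn P {ω | X ω = x} ({ω | Z ω = 1}.indicator f)
          - m x * piX P X Z x) + m x := by
  set A := {ω | X ω = x}
  set T := {ω | Z ω = 1}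
  have h_eqOn : EqOn (psiT1 X Z pit f m)
      (fun ω => (pit x)⁻¹ * (T.indicator f ω - m x * T.indicator 1 ω) + m x) A := by
    intro ω (hω : X ω = x)
    simp only [psiT1, hω, indicator_apply, Pi.one_apply, T, mem_ofPred_eq]
    split_ifs <;> ring
  have hT1 : IntegrableOn (T.indicator 1) A P :=
    (integrable_const (1 : ℝ)).integrableOn.indicator hZ
  have h_lin : IntegrableOn
      (fun ω => (pit x)⁻¹ * (T.indicator f ω - m x * T.indicator 1 ω)) A P :=
    (hf.sub (hT1.const_mul (m x))).const_mul _
  have hA : (P A).toReal ≠ 0 := ENNReal.toReal_ne_zero.mpr ⟨hPX, measure_ne_top P A⟩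
  rw [piX, ← condMeanOn_indicator_one (A := A) hZ]
  simp only [condMeanOn]
  rw [setIntegral_congr_fun hX h_eqOn, integral_add h_lin (integrable_const (m x)).integrableOn,
    integral_const_mul, integral_sub hf (hT1.const_mul _), integral_const_mul, setIntegral_const,
    smul_eq_mul, Measure.real]
  field_simp

lemma piX_mul_one_sub_pZs {S : Ω → ℝ} (hS01 : ∀ ω, S ω = 0 ∨ S ω = 1)
    (hS1 : MeasurableSet {ω | S ω = 1}) (hZX : P {ω | Z ω = 1 ∧ X ω = x} ≠ 0) :
    piX P X Z x * (1 - pZs P X Z S 1 x)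
      = condProbOn P ({ω | Z ω = 1} ∩ {ω | S ω = 0}) {ω | X ω = x} := by
  have h_S0 : {ω | S ω = 0} = {ω | S ω = 1}ᶜ := by
    ext ω; rcases hS01 ω with h | h <;> simp [h]
  rw [inter_comm, condProbOn_inter, h_S0,
    condProbOn_compl (B := {ω | Z ω = 1} ∩ {ω | X ω = x}) hS1 hZX]
  rfl

end CondMeanOn

theorem plug_in_scores_proportionality_general
    {Ω : Type*} [MeasurableSpace Ω] (P : Measure Ω) [IsProbabilityMeasure P]
    {d : ℕ} (X : Ω → Fin d → ℝ) (Y Z S : Ω → ℝ)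
    (hXm : Measurable X) (hZm : Measurable Z) (hSm : Measurable S)
    (hS01 : ∀ ω, S ω = 0 ∨ S ω = 1)
    (hYi : Integrable Y P)
    (pit pt1 : (Fin d → ℝ) → ℝ) :
    ∀ x : Fin d → ℝ,
      P {ω | X ω = x} ≠ 0 →
      (∀ z : ℝ, z = 0 ∨ z = 1 → P {ω | Z ω = z ∧ X ω = x} ≠ 0) →
      (∀ z s : ℝ, (z = 0 ∨ z = 1) → (s = 0 ∨ s = 1) →
        P {ω | Z ω = z ∧ S ω = s ∧ X ω = x} ≠ 0) →
      0 < piX P X Z x → piX P X Z x < 1 →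
      (condMeanOn P {ω | X ω = x}
            (psiT1 X Z pit (fun ω => Y ω * (1 - S ω))
              (fun x' => muZS P X Z S Y 1 0 x' * (1 - pt1 x')))
          = muZS P X Z S Y 1 0 x
              * condMeanOn P {ω | X ω = x}
                  (psiT1 X Z pit (fun ω => 1 - S ω) (fun x' => 1 - pt1 x'))) ∧
      (condMeanOn P {ω | X ω = x}
            (psiT1 X Z pit (fun ω => 1 - S ω) (fun x' => 1 - pt1 x'))
          = piX P X Z x / pit x * (pt1 x - pZs P X Z S 1 x) + 1 - pt1 x) := by
  intro x hX hZX _ _ _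
  have hA : MeasurableSet {ω | X ω = x} := hXm (measurableSet_singleton x)
  have hZ1 : MeasurableSet {ω | Z ω = 1} := hZm (measurableSet_singleton 1)
  have hS1 : MeasurableSet {ω | S ω = 1} := hSm (measurableSet_singleton 1)
  have hE : MeasurableSet ({ω | Z ω = 1} ∩ {ω | S ω = 0}) :=
    hZ1.inter (hSm (measurableSet_singleton 0))
  have h_one := indicator_mul_one_sub_eq_indicator_inter hS01 {ω | Z ω = 1} 1
  simp only [Pi.one_apply, one_mul] at h_one
  have h_Y := indicator_mul_one_sub_eq_indicator_inter hS01 {ω | Z ω = 1} Y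
  have h_S1 := condMeanOn_psiT1 pit (fun ω => 1 - S ω) (fun x' => 1 - pt1 x') hA hZ1
    (by rw [h_one]; exact (integrable_const (1 : ℝ)).integrableOn.indicator hE) hX
  have h_SY := condMeanOn_psiT1 pit (fun ω => Y ω * (1 - S ω))
    (fun x' => muZS P X Z S Y 1 0 x' * (1 - pt1 x')) hA hZ1
    (by rw [h_Y]; exact (hYi.indicator hE).integrableOn) hX
  rw [h_one, condMeanOn_indicator_one hE] at h_S1
  have h_mu : condMeanOn P ({ω | Z ω = 1} ∩ ({ω | S ω = 0} ∩ {ω | X ω = x})) Y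
      = muZS P X Z S Y 1 0 x := rfl
  rw [h_Y, condMeanOn_indicator hE, inter_assoc, h_mu] at h_SY
  constructor
  · rw [h_SY, h_S1]
    ring
  · rw [h_S1, ← piX_mul_one_sub_pZs hS01 hS1 (hZX 1 (Or.inr rfl))]
    ring

/-- Proportionality of plug-in augmented scores under a correct outcome model. -/
theorem plug_in_scores_proportionality
    {Ω : Type*} [MeasurableSpace Ω] (P : Measure Ω) [IsProbabilityMeasure P]
    {d : ℕ} (X : Ω → Fin d → ℝ) (Y Z S : Ω → ℝ)
    (hXm : Measurable X) (hYm : Measurable Y) (hZm : Measurable Z) (hSm : Measurable S)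
    (hZ01 : ∀ ω, Z ω = 0 ∨ Z ω = 1) (hS01 : ∀ ω, S ω = 0 ∨ S ω = 1)
    (hYi : Integrable Y P)
    (pit pt1 : (Fin d → ℝ) → ℝ)
    (hpitm : Measurable pit) (hpt1m : Measurable pt1)
    (hpitr : ∀ x, 0 < pit x ∧ pit x < 1) :
    ∀ x : Fin d → ℝ,
      P {ω | X ω = x} ≠ 0 →
      (∀ z : ℝ, z = 0 ∨ z = 1 → P {ω | Z ω = z ∧ X ω = x} ≠ 0) →
      (∀ z s : ℝ, (z = 0 ∨ z = 1) → (s = 0 ∨ s = 1) →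
        P {ω | Z ω = z ∧ S ω = s ∧ X ω = x} ≠ 0) →
      0 < piX P X Z x → piX P X Z x < 1 →
      (condMeanOn P {ω | X ω = x}
            (psiT1 X Z pit (fun ω => Y ω * (1 - S ω))
              (fun x' => muZS P X Z S Y 1 0 x' * (1 - pt1 x')))
          = muZS P X Z S Y 1 0 x
              * condMeanOn P {ω | X ω = x}
                  (psiT1 X Z pit (fun ω => 1 - S ω) (fun x' => 1 - pt1 x'))) ∧
      (condMeanOn P {ω | X ω = x}
            (psiT1 X Z pit (fun ω => 1 - S ω) (fun x' => 1 - pt1 x'))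
          = piX P X Z x / pit x * (pt1 x - pZs P X Z S 1 x) + 1 - pt1 x) :=
  plug_in_scores_proportionality_general P X Y Z S hXm hZm hSm hS01 hYi pit pt1
end
end

section
/- (One-step identification of the CPCEs.) Under Assumptions 1–4, for any measurable preliminary function τ̌^u(·) and each u ∈ {00,10,11}, the CPCE satisfies the one-step identity: for all x, τ^u(x) = E[ τ̌^u(X) + (φ_{1,u}(W) − φ_{0,u}(W) − τ̌^u(X)·g^u(W)) / e^u(X) | X=x ]. -/
open MeasureTheory Filter
open scoped Classical

noncomputable section

/-- Augmented score `ψ_{a,f}(W)` built from the true nuisance functions: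
`ψ_{a,f}(W) = 1(Z = a)/P(Z = a | X) · (f(W) - E[f | X, Z = a]) + E[f | X, Z = a]`. -/
def psiA {Ω 𝓧 : Type*} [MeasurableSpace Ω] (P : Measure Ω) (X : Ω → 𝓧) (Z : Ω → ℝ)
    (a : ℝ) (f : Ω → ℝ) : Ω → ℝ :=
  fun ω =>
    (if Z ω = a then (1 : ℝ) else 0) / condProbOn P {ω' | Z ω' = a} {ω' | X ω' = X ω}
        * (f ω - condMeanOn P {ω' | Z ω' = a ∧ X ω' = X ω} f)
      + condMeanOn P {ω' | Z ω' = a ∧ X ω' = X ω} f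

/-- EIF component `φ_{1,10}`. -/
def phiA1_10 {Ω 𝓧 : Type*} [MeasurableSpace Ω] (P : Measure Ω) (X : Ω → 𝓧)
    (Z S Y : Ω → ℝ) : Ω → ℝ :=
  fun ω =>
    ((pZs P X Z S 1 (X ω) - pZs P X Z S 0 (X ω)) / pZs P X Z S 1 (X ω))
        * psiA P X Z 1 (fun ω' => Y ω' * S ω') ω
      - muZS P X Z S Y 1 1 (X ω)
          * (psiA P X Z 0 S ω
              - (pZs P X Z S 0 (X ω) / pZs P X Z S 1 (X ω)) * psiA P X Z 1 S ω)

/-- EIF component `φ_{0,10}`. -/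
def phiA0_10 {Ω 𝓧 : Type*} [MeasurableSpace Ω] (P : Measure Ω) (X : Ω → 𝓧)
    (Z S Y : Ω → ℝ) : Ω → ℝ :=
  fun ω =>
    ((pZs P X Z S 1 (X ω) - pZs P X Z S 0 (X ω)) / (1 - pZs P X Z S 0 (X ω)))
        * psiA P X Z 0 (fun ω' => Y ω' * (1 - S ω')) ω
      - muZS P X Z S Y 0 0 (X ω)
          * (psiA P X Z 1 (fun ω' => 1 - S ω') ω
              - ((1 - pZs P X Z S 1 (X ω)) / (1 - pZs P X Z S 0 (X ω)))
                  * psiA P X Z 0 (fun ω' => 1 - S ω') ω)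

/-- EIF component `φ_{1,11}`. -/
def phiA1_11 {Ω 𝓧 : Type*} [MeasurableSpace Ω] (P : Measure Ω) (X : Ω → 𝓧)
    (Z S Y : Ω → ℝ) : Ω → ℝ :=
  fun ω =>
    (pZs P X Z S 0 (X ω) / pZs P X Z S 1 (X ω))
        * psiA P X Z 1 (fun ω' => Y ω' * S ω') ω
      + muZS P X Z S Y 1 1 (X ω)
          * (psiA P X Z 0 S ω
              - (pZs P X Z S 0 (X ω) / pZs P X Z S 1 (X ω)) * psiA P X Z 1 S ω)

/-- EIF component `φ_{0,11}`. -/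
def phiA0_11 {Ω 𝓧 : Type*} [MeasurableSpace Ω] (P : Measure Ω) (X : Ω → 𝓧)
    (Z S Y : Ω → ℝ) : Ω → ℝ :=
  psiA P X Z 0 (fun ω' => Y ω' * S ω')

/-- EIF component `φ_{1,00}`. -/
def phiA1_00 {Ω 𝓧 : Type*} [MeasurableSpace Ω] (P : Measure Ω) (X : Ω → 𝓧)
    (Z S Y : Ω → ℝ) : Ω → ℝ :=
  psiA P X Z 1 (fun ω' => Y ω' * (1 - S ω'))

/-- EIF component `φ_{0,00}`. -/
def phiA0_00 {Ω 𝓧 : Type*} [MeasurableSpace Ω] (P : Measure Ω) (X : Ω → 𝓧)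
    (Z S Y : Ω → ℝ) : Ω → ℝ :=
  fun ω =>
    ((1 - pZs P X Z S 1 (X ω)) / (1 - pZs P X Z S 0 (X ω)))
        * psiA P X Z 0 (fun ω' => Y ω' * (1 - S ω')) ω
      + muZS P X Z S Y 0 0 (X ω)
          * (psiA P X Z 1 (fun ω' => 1 - S ω') ω
              - ((1 - pZs P X Z S 1 (X ω)) / (1 - pZs P X Z S 0 (X ω)))
                  * psiA P X Z 0 (fun ω' => 1 - S ω') ω)

/-- Denominator score `g^{00} = ψ_{1,1-S}`. -/
def gA00 {Ω 𝓧 : Type*} [MeasurableSpace Ω] (P : Measure Ω) (X : Ω → 𝓧)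
    (Z S : Ω → ℝ) : Ω → ℝ :=
  psiA P X Z 1 (fun ω' => 1 - S ω')

/-- Denominator score `g^{10} = ψ_{1,S} - ψ_{0,S}`. -/
def gA10 {Ω 𝓧 : Type*} [MeasurableSpace Ω] (P : Measure Ω) (X : Ω → 𝓧)
    (Z S : Ω → ℝ) : Ω → ℝ :=
  fun ω => psiA P X Z 1 S ω - psiA P X Z 0 S ω

/-- Denominator score `g^{11} = ψ_{0,S}`. -/
def gA11 {Ω 𝓧 : Type*} [MeasurableSpace Ω] (P : Measure Ω) (X : Ω → 𝓧)
    (Z S : Ω → ℝ) : Ω → ℝ :=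
  psiA P X Z 0 S

/-!
Fix `x` with `P(X = x) > 0` and write `E_x` for the conditional mean given `X = x`. On `{X = x}`
every nuisance is a constant and the correction term of `ψ_{a,f}` is centred on the cell
`{Z = a, X = x}`, so `E_x ψ_{a,f} = E[f | Z = a, X = x]`. For binary `S` these cell means are
`p_a`, `1 - p_a`, `μ_{a1} p_a` and `μ_{a0} (1 - p_a)`, whence `E_x g^u = e^u(x)` and
`E_x (φ_{1,u} - φ_{0,u})` is `e^u(x)` times a difference of two `μ_{zs}(x)`.

Treatment ignorability transports the law of `(Y(1), Y(0), S(1), S(0))` from `{Z = z, X = x}` to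
`{X = x}`, so `μ_{zs}(x) = E[Y(z) | S(z) = s, X = x]`. Under monotonicity `{S(1) = 0}` and
`{S(0) = 1}` are the strata `00` and `11`, and principal ignorability makes the mixtures
`{S(1) = 1} = 11 ∪ 10` and `{S(0) = 0} = 00 ∪ 10` homogeneous in `Y(1)`, resp. `Y(0)`; this
identifies `τ^u(x)` with exactly that difference of `μ_{zs}(x)`. The one-step update is affine in
the two means, so its conditional mean is `τ̌ + (τ e - τ̌ e) / e = τ`.
-/

section CondMean

variable {Ω : Type*} [MeasurableSpace Ω] {P : Measure Ω} {A C : Set Ω} {f g : Ω → ℝ} {m n : ℝ}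

theorem setIntegral_eq_condMeanOn_mul [IsFiniteMeasure P] (A : Set Ω) (f : Ω → ℝ) :
    ∫ ω in A, f ω ∂P = condMeanOn P A f * (P A).toReal := by
  rcases eq_or_ne (P A) 0 with hA | hA
  · simp [Measure.restrict_eq_zero.2 hA, hA]
  · rw [condMeanOn, div_mul_cancel₀ _ (ENNReal.toReal_ne_zero.2 ⟨hA, measure_ne_top P A⟩)]

theorem condMeanOn_congr (hA : MeasurableSet A) (h : Set.EqOn f g A) :
    condMeanOn P A f = condMeanOn P A g := by
  rw [condMeanOn, condMeanOn, setIntegral_congr_fun hA h]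

theorem condMeanOn_congr_set (h : A =ᵐ[P] C) : condMeanOn P A f = condMeanOn P C f := by
  rw [condMeanOn, condMeanOn, setIntegral_congr_set h, measure_congr h]

structure HasCondMeanOn (P : Measure Ω) (A : Set Ω) (f : Ω → ℝ) (m : ℝ) : Prop where
  integrableOn : IntegrableOn f A P
  condMeanOn_eq : condMeanOn P A f = m

namespace HasCondMeanOn

theorem const [IsFiniteMeasure P] (hA : P A ≠ 0) (c : ℝ) :
    HasCondMeanOn P A (fun _ => c) c := by
  refine ⟨integrableOn_const (measure_ne_top P A), ?_⟩
  rw [condMeanOn, setIntegral_const, smul_eq_mul, measureReal_def,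
    mul_div_cancel_left₀ _ (ENNReal.toReal_ne_zero.2 ⟨hA, measure_ne_top P A⟩)]

theorem add (hf : HasCondMeanOn P A f m) (hg : HasCondMeanOn P A g n) :
    HasCondMeanOn P A (fun ω => f ω + g ω) (m + n) := by
  obtain ⟨hf, rfl⟩ := hf
  obtain ⟨hg, rfl⟩ := hg
  exact ⟨hf.add hg, by rw [condMeanOn, integral_add hf hg, add_div]; rfl⟩

theorem sub (hf : HasCondMeanOn P A f m) (hg : HasCondMeanOn P A g n) :
    HasCondMeanOn P A (fun ω => f ω - g ω) (m - n) := by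
  obtain ⟨hf, rfl⟩ := hf
  obtain ⟨hg, rfl⟩ := hg
  exact ⟨hf.sub hg, by rw [condMeanOn, integral_sub hf hg, sub_div]; rfl⟩

theorem const_mul (hf : HasCondMeanOn P A f m) (c : ℝ) :
    HasCondMeanOn P A (fun ω => c * f ω) (c * m) := by
  obtain ⟨hf, rfl⟩ := hf
  exact ⟨hf.const_mul c, by rw [condMeanOn, integral_const_mul, mul_div_assoc]; rfl⟩

theorem div_const (hf : HasCondMeanOn P A f m) (c : ℝ) :
    HasCondMeanOn P A (fun ω => f ω / c) (m / c) := by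
  obtain ⟨hf, rfl⟩ := hf
  exact ⟨hf.div_const c, by rw [condMeanOn, integral_div, div_right_comm]; rfl⟩

theorem congr (hf : HasCondMeanOn P A f m) (hA : MeasurableSet A) (hfg : Set.EqOn f g A)
    (hmn : m = n) : HasCondMeanOn P A g n :=
  ⟨hf.1.congr_fun hfg hA, hmn ▸ (condMeanOn_congr hA hfg).symm.trans hf.2⟩

theorem indicator [IsFiniteMeasure P] (hC : MeasurableSet C)
    (hf : HasCondMeanOn P (C ∩ A) f m) :
    HasCondMeanOn P A (C.indicator f) (m * condProbOn P C A) := by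
  refine ⟨?_, ?_⟩
  · rw [IntegrableOn, integrable_indicator_iff hC, IntegrableOn, Measure.restrict_restrict hC]
    exact hf.1
  · rw [condMeanOn, integral_indicator hC, Measure.restrict_restrict hC,
      setIntegral_eq_condMeanOn_mul, hf.2, condProbOn, mul_div_assoc]

theorem union [IsFiniteMeasure P] (hA : HasCondMeanOn P A f m) (hC : HasCondMeanOn P C f m)
    (hd : Disjoint A C) (hCm : MeasurableSet C) (hAC : P (A ∪ C) ≠ 0) :
    HasCondMeanOn P (A ∪ C) f m := by
  refine ⟨hA.1.union hC.1, ?_⟩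
  rw [condMeanOn, setIntegral_union hd hCm hA.1 hC.1, setIntegral_eq_condMeanOn_mul,
    setIntegral_eq_condMeanOn_mul, hA.2, hC.2, ← mul_add, ← ENNReal.toReal_add
    (measure_ne_top P A) (measure_ne_top P C), ← measure_union hd hCm,
    mul_div_cancel_right₀ _ (ENNReal.toReal_ne_zero.2 ⟨hAC, measure_ne_top P _⟩)]

end HasCondMeanOn

theorem condMeanOn_sub (hf : IntegrableOn f A P) (hg : IntegrableOn g A P) :
    condMeanOn P A (fun ω => f ω - g ω) = condMeanOn P A f - condMeanOn P A g :=
  (HasCondMeanOn.sub ⟨hf, rfl⟩ ⟨hg, rfl⟩).condMeanOn_eq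

end CondMean

section Psi

variable {Ω 𝓧 : Type*} [MeasurableSpace Ω] {P : Measure Ω} {X : Ω → 𝓧} {Z : Ω → ℝ} {x : 𝓧}

theorem psiA_eqOn (a : ℝ) (f : Ω → ℝ) :
    Set.EqOn
      (fun ω => {ω | Z ω = a}.indicator
          (fun ω => (f ω - condMeanOn P {ω | Z ω = a ∧ X ω = x} f)
            / condProbOn P {ω | Z ω = a} {ω | X ω = x}) ω
        + condMeanOn P {ω | Z ω = a ∧ X ω = x} f)
      (psiA P X Z a f) {ω | X ω = x} := by
  intro ω (hω : X ω = x)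
  by_cases hZ : Z ω = a <;> simp [psiA, hω, hZ, div_eq_inv_mul]

theorem hasCondMeanOn_psiA [IsFiniteMeasure P] {a : ℝ} {f : Ω → ℝ}
    (hB : MeasurableSet {ω | X ω = x}) (hB0 : P {ω | X ω = x} ≠ 0)
    (hZ : MeasurableSet {ω | Z ω = a}) (hC0 : P {ω | Z ω = a ∧ X ω = x} ≠ 0)
    (hf : IntegrableOn f {ω | X ω = x} P) :
    HasCondMeanOn P {ω | X ω = x} (psiA P X Z a f)
      (condMeanOn P {ω | Z ω = a ∧ X ω = x} f) := by
  set m := condMeanOn P {ω | Z ω = a ∧ X ω = x} f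
  have hC : HasCondMeanOn P ({ω | Z ω = a} ∩ {ω | X ω = x}) f m :=
    ⟨hf.mono_set Set.inter_subset_right, rfl⟩
  exact (((hC.sub (.const hC0 m)).div_const _).indicator hZ |>.add (.const hB0 m)).congr hB
    (psiA_eqOn a f) (by simp)

end Psi

section Binary

variable {Ω : Type*} {S : Ω → ℝ}

theorem mul_eq_indicator_of_binary (hS : ∀ ω, S ω = 0 ∨ S ω = 1) (Y : Ω → ℝ) :
    (fun ω => Y ω * S ω) = {ω | S ω = 1}.indicator Y := by
  funext ω
  rcases hS ω with h | h <;> simp [h]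

theorem mul_one_sub_eq_indicator_of_binary (hS : ∀ ω, S ω = 0 ∨ S ω = 1) (Y : Ω → ℝ) :
    (fun ω => Y ω * (1 - S ω)) = {ω | S ω = 0}.indicator Y := by
  funext ω
  rcases hS ω with h | h <;> simp [h]

end Binary

section PsiMeans

variable {Ω 𝓧 : Type*} [MeasurableSpace Ω] {P : Measure Ω} {X : Ω → 𝓧} {Z S Y : Ω → ℝ} {x : 𝓧}

structure PsiMeans (P : Measure Ω) (X : Ω → 𝓧) (Z S Y : Ω → ℝ) (x : 𝓧) (a : ℝ) : Prop where
  psiS : HasCondMeanOn P {ω | X ω = x} (psiA P X Z a S) (pZs P X Z S a x)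
  psiOneSubS : HasCondMeanOn P {ω | X ω = x} (psiA P X Z a fun ω => 1 - S ω)
    (1 - pZs P X Z S a x)
  psiMulS : HasCondMeanOn P {ω | X ω = x} (psiA P X Z a fun ω => Y ω * S ω)
    (muZS P X Z S Y a 1 x * pZs P X Z S a x)
  psiMulOneSubS : HasCondMeanOn P {ω | X ω = x} (psiA P X Z a fun ω => Y ω * (1 - S ω))
    (muZS P X Z S Y a 0 x * (1 - pZs P X Z S a x))

theorem psiMeans_of_binary [IsFiniteMeasure P] (hB : MeasurableSet {ω | X ω = x})
    (hB0 : P {ω | X ω = x} ≠ 0) (hZ : Measurable Z) (hSm : Measurable S)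
    (hS : ∀ ω, S ω = 0 ∨ S ω = 1) (hY : Integrable Y P) {a : ℝ}
    (hcell : ∀ s : ℝ, s = 0 ∨ s = 1 → P {ω | Z ω = a ∧ S ω = s ∧ X ω = x} ≠ 0) :
    PsiMeans P X Z S Y x a := by
  set C := {ω | Z ω = a ∧ X ω = x}
  have hSs (s : ℝ) : MeasurableSet {ω | S ω = s} := hSm (measurableSet_singleton s)
  have hCm : MeasurableSet C := (hZ (measurableSet_singleton a)).inter hB
  have hC0 : P C ≠ 0 := fun h => hcell 1 (.inr rfl) <| measure_mono_null
    (fun ω (hω : Z ω = a ∧ S ω = 1 ∧ X ω = x) => (⟨hω.1, hω.2.2⟩ : Z ω = a ∧ X ω = x)) h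
  have hind {s m : ℝ} {g : Ω → ℝ} (h : HasCondMeanOn P {ω | Z ω = a ∧ S ω = s ∧ X ω = x} g m) :
      HasCondMeanOn P C ({ω | S ω = s}.indicator g) (m * condProbOn P {ω | S ω = s} C) :=
    .indicator (hSs s) (by convert h using 2; ext; exact and_left_comm)
  have hS1 : S = {ω | S ω = 1}.indicator fun _ => 1 := by
    simpa using mul_eq_indicator_of_binary hS fun _ => 1
  have hS0 : (fun ω => 1 - S ω) = {ω | S ω = 0}.indicator fun _ => 1 := by
    simpa using mul_one_sub_eq_indicator_of_binary hS fun _ => 1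
  have hSC : HasCondMeanOn P C S (pZs P X Z S a x) :=
    (hind (.const (hcell 1 (.inr rfl)) 1)).congr hCm (fun ω _ => (congrFun hS1 ω).symm)
      (one_mul _)
  have h1SC : HasCondMeanOn P C (fun ω => 1 - S ω) (1 - pZs P X Z S a x) :=
    (HasCondMeanOn.const hC0 1).sub hSC
  have hq : condProbOn P {ω | S ω = 0} C = 1 - pZs P X Z S a x := by
    have := (hind (.const (hcell 0 (.inl rfl)) 1)).condMeanOn_eq
    rwa [← hS0, h1SC.condMeanOn_eq, one_mul, eq_comm] at this
  have hpsi {f : Ω → ℝ} {m : ℝ} (hfC : HasCondMeanOn P C f m) (hf : Integrable f P) :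
      HasCondMeanOn P {ω | X ω = x} (psiA P X Z a f) m :=
    let h := hasCondMeanOn_psiA hB hB0 (hZ (measurableSet_singleton a)) hC0 hf.integrableOn
    ⟨h.1, h.2.trans hfC.2⟩
  have hSi : Integrable S P := hS1 ▸ (integrable_const 1).indicator (hSs 1)
  refine ⟨hpsi hSC hSi, hpsi h1SC ((integrable_const 1).sub hSi), ?_, ?_⟩
  · rw [mul_eq_indicator_of_binary hS]
    exact hpsi (hind ⟨hY.integrableOn, rfl⟩) (hY.indicator (hSs 1))
  · rw [mul_one_sub_eq_indicator_of_binary hS, ← hq]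
    exact hpsi (hind ⟨hY.integrableOn, rfl⟩) (hY.indicator (hSs 0))

end PsiMeans

section OneStep

variable {Ω 𝓧 : Type*} [MeasurableSpace Ω] {P : Measure Ω} {X : Ω → 𝓧} {Z S Y : Ω → ℝ} {x : 𝓧}

theorem PsiMeans.hasCondMeanOn_phiA1_00_sub_phiA0_00 (h1 : PsiMeans P X Z S Y x 1)
    (h0 : PsiMeans P X Z S Y x 0) (hB : MeasurableSet {ω | X ω = x})
    (hp0 : pZs P X Z S 0 x ≠ 1) :
    HasCondMeanOn P {ω | X ω = x} (fun ω => phiA1_00 P X Z S Y ω - phiA0_00 P X Z S Y ω)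
      ((muZS P X Z S Y 1 0 x - muZS P X Z S Y 0 0 x) * (1 - pZs P X Z S 1 x)) := by
  refine (h1.psiMulOneSubS.sub
    ((h0.psiMulOneSubS.const_mul ((1 - pZs P X Z S 1 x) / (1 - pZs P X Z S 0 x))).add
      ((h1.psiOneSubS.sub
        (h0.psiOneSubS.const_mul ((1 - pZs P X Z S 1 x) / (1 - pZs P X Z S 0 x)))).const_mul
          (muZS P X Z S Y 0 0 x)))).congr hB
    (fun ω (hω : X ω = x) => by simp only [phiA1_00, phiA0_00, hω]) ?_
  have : 1 - pZs P X Z S 0 x ≠ 0 := sub_ne_zero.2 hp0.symm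
  field_simp
  ring

theorem PsiMeans.hasCondMeanOn_phiA1_10_sub_phiA0_10 (h1 : PsiMeans P X Z S Y x 1)
    (h0 : PsiMeans P X Z S Y x 0) (hB : MeasurableSet {ω | X ω = x})
    (hp0 : pZs P X Z S 0 x ≠ 1) (hp1 : pZs P X Z S 1 x ≠ 0) :
    HasCondMeanOn P {ω | X ω = x} (fun ω => phiA1_10 P X Z S Y ω - phiA0_10 P X Z S Y ω)
      ((muZS P X Z S Y 1 1 x - muZS P X Z S Y 0 0 x) * (pZs P X Z S 1 x - pZs P X Z S 0 x)) := by
  refine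
    (((h1.psiMulS.const_mul ((pZs P X Z S 1 x - pZs P X Z S 0 x) / pZs P X Z S 1 x)).sub
      ((h0.psiS.sub (h1.psiS.const_mul (pZs P X Z S 0 x / pZs P X Z S 1 x))).const_mul
        (muZS P X Z S Y 1 1 x))).sub
    ((h0.psiMulOneSubS.const_mul
        ((pZs P X Z S 1 x - pZs P X Z S 0 x) / (1 - pZs P X Z S 0 x))).sub
      ((h1.psiOneSubS.sub (h0.psiOneSubS.const_mul
        ((1 - pZs P X Z S 1 x) / (1 - pZs P X Z S 0 x)))).const_mul
          (muZS P X Z S Y 0 0 x)))).congr hB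
    (fun ω (hω : X ω = x) => by simp only [phiA1_10, phiA0_10, hω]) ?_
  have : 1 - pZs P X Z S 0 x ≠ 0 := sub_ne_zero.2 hp0.symm
  field_simp
  ring

theorem PsiMeans.hasCondMeanOn_phiA1_11_sub_phiA0_11 (h1 : PsiMeans P X Z S Y x 1)
    (h0 : PsiMeans P X Z S Y x 0) (hB : MeasurableSet {ω | X ω = x})
    (hp1 : pZs P X Z S 1 x ≠ 0) :
    HasCondMeanOn P {ω | X ω = x} (fun ω => phiA1_11 P X Z S Y ω - phiA0_11 P X Z S Y ω)
      ((muZS P X Z S Y 1 1 x - muZS P X Z S Y 0 1 x) * pZs P X Z S 0 x) := by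
  refine (((h1.psiMulS.const_mul (pZs P X Z S 0 x / pZs P X Z S 1 x)).add
      ((h0.psiS.sub (h1.psiS.const_mul (pZs P X Z S 0 x / pZs P X Z S 1 x))).const_mul
        (muZS P X Z S Y 1 1 x))).sub h0.psiMulS).congr hB
    (fun ω (hω : X ω = x) => by simp only [phiA1_11, phiA0_11, hω]) ?_
  field_simp
  ring

theorem condMeanOn_one_step [IsFiniteMeasure P] (hB : MeasurableSet {ω | X ω = x})
    (hB0 : P {ω | X ω = x} ≠ 0) {D g : Ω → ℝ} {t e : 𝓧 → ℝ} {τ : ℝ}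
    (hD : HasCondMeanOn P {ω | X ω = x} D (τ * e x)) (hg : HasCondMeanOn P {ω | X ω = x} g (e x))
    (he : e x ≠ 0) :
    condMeanOn P {ω | X ω = x} (fun ω => t (X ω) + (D ω - t (X ω) * g ω) / e (X ω)) = τ :=
  (((HasCondMeanOn.const hB0 (t x)).add ((hD.sub (hg.const_mul (t x))).div_const (e x))).congr hB
    (fun ω (hω : X ω = x) => by simp only [hω]) (by field_simp; ring)).condMeanOn_eq

end OneStep

theorem div_eq_div_of_mul_eq_mul {b c X Y p q : ℝ} (hb : b ≠ 0) (hc : c ≠ 0)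
    (hX : b * X = c * Y) (hp : b * p = c * q) : X / p = Y / q := by
  rw [show X = c / b * Y by field_simp; linarith, show p = c / b * q by field_simp; linarith,
    mul_div_mul_left _ _ (div_ne_zero hc hb)]

section Transfer

variable {Ω β : Type*} [MeasurableSpace Ω] [MeasurableSpace β] {P : Measure Ω} {V : Ω → β}
  {B C : Set Ω}

-- `h` says that `V` has the same law under `P(· | C)` as under `P(· | B)`, cross-multiplied.
theorem smul_map_restrict_eq (hV : Measurable V)
    (h : ∀ A, MeasurableSet A → P (V ⁻¹' A ∩ C) * P B = P (V ⁻¹' A ∩ B) * P C) :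
    P B • (P.restrict C).map V = P C • (P.restrict B).map V := by
  ext A hA
  simp only [Measure.smul_apply, Measure.map_apply hV hA, Measure.restrict_apply (hV hA),
    smul_eq_mul]
  rw [mul_comm, h A hA, mul_comm]

theorem integrableOn_comp_of_smul_map_restrict_eq [IsFiniteMeasure P] (hV : Measurable V)
    (h : P B • (P.restrict C).map V = P C • (P.restrict B).map V) (hC : P C ≠ 0) {g : β → ℝ}
    (hg : Measurable g) (hgC : IntegrableOn (g ∘ V) C P) : IntegrableOn (g ∘ V) B P := by
  have hmap := integrable_map_measure (μ := P.restrict C) hg.aestronglyMeasurable hV.aemeasurable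
  have := (hmap.2 hgC).smul_measure (measure_ne_top P B)
  rw [h, integrable_smul_measure hC (measure_ne_top P C)] at this
  exact (integrable_map_measure hg.aestronglyMeasurable hV.aemeasurable).1 this

theorem condMeanOn_preimage_inter_eq [IsFiniteMeasure P] (hV : Measurable V)
    (h : P B • (P.restrict C).map V = P C • (P.restrict B).map V) (hB : P B ≠ 0) (hC : P C ≠ 0)
    {A : Set β} (hA : MeasurableSet A) {g : β → ℝ} (hg : Measurable g) :
    condMeanOn P (V ⁻¹' A ∩ C) (g ∘ V) = condMeanOn P (V ⁻¹' A ∩ B) (g ∘ V) := by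
  have hA' : P B • (P.restrict (V ⁻¹' A ∩ C)).map V = P C • (P.restrict (V ⁻¹' A ∩ B)).map V := by
    rw [← Measure.restrict_restrict (hV hA), ← Measure.restrict_restrict (hV hA),
      ← Measure.restrict_map hV hA, ← Measure.restrict_map hV hA, ← Measure.restrict_smul,
      ← Measure.restrict_smul, h]
  have hint := congrArg (fun ν => ∫ t, g t ∂ν) hA'
  have huniv := congrArg (fun ν => (ν Set.univ).toReal) hA'
  simp only [integral_smul_measure, integral_map hV.aemeasurable hg.aestronglyMeasurable,
    smul_eq_mul, Measure.smul_apply, Measure.map_apply hV MeasurableSet.univ, Set.preimage_univ,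
    Measure.restrict_apply MeasurableSet.univ, Set.univ_inter, ENNReal.toReal_mul] at hint huniv
  exact div_eq_div_of_mul_eq_mul (ENNReal.toReal_ne_zero.2 ⟨hB, measure_ne_top P B⟩)
    (ENNReal.toReal_ne_zero.2 ⟨hC, measure_ne_top P C⟩) hint huniv

end Transfer

section Identification

variable {Ω 𝓧 β : Type*} [MeasurableSpace Ω] [MeasurableSpace β] {P : Measure Ω} {X : Ω → 𝓧}
  {Z S Y : Ω → ℝ} {x : 𝓧}

theorem muZS_eq_condMeanOn_of_condIndep [IsFiniteMeasure P] {V : Ω → β} (hV : Measurable V)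
    {Yz Sz : Ω → ℝ} {gY gS : β → ℝ} (hgY : Measurable gY) (hgS : Measurable gS)
    (hYz : Yz = gY ∘ V) (hSz : Sz = gS ∘ V) {z : ℝ} (hB : MeasurableSet {ω | X ω = x})
    (hZ : MeasurableSet {ω | Z ω = z}) (hB0 : P {ω | X ω = x} ≠ 0)
    (hC0 : P {ω | Z ω = z ∧ X ω = x} ≠ 0)
    (hind : ∀ A, MeasurableSet A →
      P (V ⁻¹' A ∩ {ω | Z ω = z} ∩ {ω | X ω = x}) * P {ω | X ω = x}
        = P (V ⁻¹' A ∩ {ω | X ω = x}) * P ({ω | Z ω = z} ∩ {ω | X ω = x}))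
    (hcons : ∀ ω, Z ω = z → S ω = Sz ω ∧ Y ω = Yz ω) (hY : Integrable Y P) :
    IntegrableOn Yz {ω | X ω = x} P ∧
      ∀ s, muZS P X Z S Y z s x = condMeanOn P ({ω | Sz ω = s} ∩ {ω | X ω = x}) Yz := by
  subst hYz hSz
  have hC : MeasurableSet ({ω | Z ω = z} ∩ {ω | X ω = x}) := hZ.inter hB
  have h := smul_map_restrict_eq hV fun A hA => by simpa only [Set.inter_assoc] using hind A hA
  have hYC : IntegrableOn (gY ∘ V) ({ω | Z ω = z} ∩ {ω | X ω = x}) P :=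
    hY.integrableOn.congr_fun (fun ω hω => (hcons ω hω.1).2) hC
  refine ⟨integrableOn_comp_of_smul_map_restrict_eq hV h hC0 hgY hYC, fun s => Eq.trans ?_
    (condMeanOn_preimage_inter_eq hV h hB0 hC0 (hgS (measurableSet_singleton s)) hgY)⟩
  have hcell : {ω | Z ω = z ∧ S ω = s ∧ X ω = x}
      = V ⁻¹' (gS ⁻¹' {s}) ∩ ({ω | Z ω = z} ∩ {ω | X ω = x}) := by
    ext ω
    simp only [Set.mem_ofPred_eq, Set.mem_inter_iff, Set.mem_preimage, Set.mem_singleton_iff]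
    constructor
    · rintro ⟨hz, rfl, hx⟩
      exact ⟨(hcons ω hz).1.symm, hz, hx⟩
    · rintro ⟨hs, hz, hx⟩
      exact ⟨hz, (hcons ω hz).1.trans hs, hx⟩
  rw [muZS, hcell]
  exact condMeanOn_congr ((hV (hgS (measurableSet_singleton s))).inter hC)
    fun ω hω => (hcons ω hω.2.1).2

end Identification

section Strata

variable {Ω 𝓧 : Type*} [MeasurableSpace Ω] {P : Measure Ω} {X : Ω → 𝓧} {Z S Y : Ω → ℝ} {x : 𝓧}
  {S1 S0 Y1 Y0 : Ω → ℝ}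

theorem tauPO_eq_muZS [IsFiniteMeasure P] (hS1m : Measurable S1) (hS0m : Measurable S0)
    (hB : MeasurableSet {ω | X ω = x}) (hS1 : ∀ ω, S1 ω = 0 ∨ S1 ω = 1)
    (hS0 : ∀ ω, S0 ω = 0 ∨ S0 ω = 1) (hmono : ∀ᵐ ω ∂P, S0 ω ≤ S1 ω)
    (h11 : P {ω | S1 ω = 1 ∧ S0 ω = 1 ∧ X ω = x} ≠ 0)
    (h00 : P {ω | S1 ω = 0 ∧ S0 ω = 0 ∧ X ω = x} ≠ 0)
    (hPI1 : condMeanOn P {ω | S1 ω = 1 ∧ S0 ω = 1 ∧ X ω = x} Y1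
      = condMeanOn P {ω | S1 ω = 1 ∧ S0 ω = 0 ∧ X ω = x} Y1)
    (hPI0 : condMeanOn P {ω | S1 ω = 0 ∧ S0 ω = 0 ∧ X ω = x} Y0
      = condMeanOn P {ω | S1 ω = 1 ∧ S0 ω = 0 ∧ X ω = x} Y0)
    (hY1 : IntegrableOn Y1 {ω | X ω = x} P) (hY0 : IntegrableOn Y0 {ω | X ω = x} P)
    (hμ1 : ∀ s, muZS P X Z S Y 1 s x = condMeanOn P ({ω | S1 ω = s} ∩ {ω | X ω = x}) Y1)
    (hμ0 : ∀ s, muZS P X Z S Y 0 s x = condMeanOn P ({ω | S0 ω = s} ∩ {ω | X ω = x}) Y0) :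
    tauPO P X S1 S0 Y1 Y0 0 0 x = muZS P X Z S Y 1 0 x - muZS P X Z S Y 0 0 x ∧
      tauPO P X S1 S0 Y1 Y0 1 0 x = muZS P X Z S Y 1 1 x - muZS P X Z S Y 0 0 x ∧
      tauPO P X S1 S0 Y1 Y0 1 1 x = muZS P X Z S Y 1 1 x - muZS P X Z S Y 0 1 x := by
  set E : ℝ → ℝ → Set Ω := fun a b => {ω | S1 ω = a ∧ S0 ω = b ∧ X ω = x}
  have hE10 : MeasurableSet (E 1 0) :=
    (hS1m (measurableSet_singleton 1)).inter ((hS0m (measurableSet_singleton 0)).inter hB)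
  have hY1E a b : IntegrableOn Y1 (E a b) P := hY1.mono_set fun ω h => h.2.2
  have hY0E a b : IntegrableOn Y0 (E a b) P := hY0.mono_set fun ω h => h.2.2
  have hS1B1 : {ω | S1 ω = 1} ∩ {ω | X ω = x} = E 1 1 ∪ E 1 0 := by
    ext ω; rcases hS0 ω with h | h <;> simp [E, h]
  have hS0B0 : {ω | S0 ω = 0} ∩ {ω | X ω = x} = E 0 0 ∪ E 1 0 := by
    ext ω; rcases hS1 ω with h | h <;> simp [E, h]
  have hS1B0 : ({ω | S1 ω = 0} ∩ {ω | X ω = x} : Set Ω) =ᵐ[P] E 0 0 := by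
    rw [Filter.eventuallyEq_set]
    filter_upwards [hmono] with ω hle
    simp only [E, Set.mem_inter_iff, Set.mem_ofPred_eq]
    grind [hS0 ω, hS1 ω]
  have hS0B1 : ({ω | S0 ω = 1} ∩ {ω | X ω = x} : Set Ω) =ᵐ[P] E 1 1 := by
    rw [Filter.eventuallyEq_set]
    filter_upwards [hmono] with ω hle
    simp only [E, Set.mem_inter_iff, Set.mem_ofPred_eq]
    grind [hS0 ω, hS1 ω]
  have hY1_11 : condMeanOn P (E 1 1) Y1 = muZS P X Z S Y 1 1 x := by
    rw [hμ1, hS1B1, (HasCondMeanOn.union ⟨hY1E 1 1, rfl⟩ ⟨hY1E 1 0, hPI1.symm⟩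
      (Set.disjoint_left.2 fun ω h h' => one_ne_zero (h.2.1.symm.trans h'.2.1)) hE10
      (fun h => h11 (measure_mono_null Set.subset_union_left h))).condMeanOn_eq]
  have hY0_00 : condMeanOn P (E 0 0) Y0 = muZS P X Z S Y 0 0 x := by
    rw [hμ0, hS0B0, (HasCondMeanOn.union ⟨hY0E 0 0, rfl⟩ ⟨hY0E 1 0, hPI0.symm⟩
      (Set.disjoint_left.2 fun ω h h' => zero_ne_one (h.1.symm.trans h'.1)) hE10
      (fun h => h00 (measure_mono_null Set.subset_union_left h))).condMeanOn_eq]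
  refine ⟨?_, ?_, ?_⟩ <;> rw [tauPO, condMeanOn_sub (hY1E _ _) (hY0E _ _)]
  · rw [hY0_00, hμ1, condMeanOn_congr_set hS1B0]
  · rw [← hPI1, ← hPI0, hY1_11, hY0_00]
  · rw [hY1_11, hμ0, condMeanOn_congr_set hS0B1]

end Strata

theorem cpce_one_step_identification_general
    {Ω : Type*} [MeasurableSpace Ω] (P : Measure Ω) [IsProbabilityMeasure P]
    {d : ℕ} (X : Ω → Fin d → ℝ) (Y Z S Y1 Y0 S1 S0 : Ω → ℝ)
    (hXm : Measurable X) (hZm : Measurable Z) (hSm : Measurable S)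
    (hY1m : Measurable Y1) (hY0m : Measurable Y0) (hS1m : Measurable S1) (hS0m : Measurable S0)
    (hS01 : ∀ ω, S ω = 0 ∨ S ω = 1)
    (hS1b : ∀ ω, S1 ω = 0 ∨ S1 ω = 1) (hS0b : ∀ ω, S0 ω = 0 ∨ S0 ω = 1)
    -- Assumption 1 (consistency)
    (hA1 : ∀ ω, Y ω = Y1 ω * Z ω + Y0 ω * (1 - Z ω) ∧ S ω = S1 ω * Z ω + S0 ω * (1 - Z ω))
    -- Assumption 2 (treatment ignorability): (Y(1),Y(0),S(1),S(0)) ⟂ Z | X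
    (hA2 : ∀ (x : Fin d → ℝ) (A : Set (ℝ × ℝ × ℝ × ℝ)), MeasurableSet A → ∀ z : ℝ,
      P ({ω | (Y1 ω, Y0 ω, S1 ω, S0 ω) ∈ A} ∩ {ω | Z ω = z} ∩ {ω | X ω = x})
          * P {ω | X ω = x}
        = P ({ω | (Y1 ω, Y0 ω, S1 ω, S0 ω) ∈ A} ∩ {ω | X ω = x})
            * P ({ω | Z ω = z} ∩ {ω | X ω = x}))
    -- Assumption 3 (monotonicity)
    (hA3 : ∀ᵐ ω ∂P, S0 ω ≤ S1 ω)
    -- Assumption 4 (principal ignorability)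
    (hA4 : ∀ x : Fin d → ℝ, P {ω | X ω = x} ≠ 0 →
      condMeanOn P {ω | S1 ω = 1 ∧ S0 ω = 1 ∧ X ω = x} Y1
          = condMeanOn P {ω | S1 ω = 1 ∧ S0 ω = 0 ∧ X ω = x} Y1 ∧
        condMeanOn P {ω | S1 ω = 0 ∧ S0 ω = 0 ∧ X ω = x} Y0
          = condMeanOn P {ω | S1 ω = 1 ∧ S0 ω = 0 ∧ X ω = x} Y0)
    (hYi : Integrable Y P)
    (tck00 tck10 tck11 : (Fin d → ℝ) → ℝ) :
    ∀ x : Fin d → ℝ,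
      P {ω | X ω = x} ≠ 0 →
      (∀ z : ℝ, z = 0 ∨ z = 1 → P {ω | Z ω = z ∧ X ω = x} ≠ 0) →
      (∀ z s : ℝ, (z = 0 ∨ z = 1) → (s = 0 ∨ s = 1) →
        P {ω | Z ω = z ∧ S ω = s ∧ X ω = x} ≠ 0) →
      (∀ a b : ℝ, ((a = 1 ∧ b = 1) ∨ (a = 1 ∧ b = 0) ∨ (a = 0 ∧ b = 0)) →
        P {ω | S1 ω = a ∧ S0 ω = b ∧ X ω = x} ≠ 0) →
      0 < piX P X Z x → piX P X Z x < 1 →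
      0 < pZs P X Z S 0 x → pZs P X Z S 1 x < 1 →
      pZs P X Z S 0 x < pZs P X Z S 1 x →
      (tauPO P X S1 S0 Y1 Y0 0 0 x
          = condMeanOn P {ω | X ω = x}
              (fun ω =>
                tck00 (X ω)
                  + (phiA1_00 P X Z S Y ω - phiA0_00 P X Z S Y ω
                      - tck00 (X ω) * gA00 P X Z S ω)
                    / (1 - pZs P X Z S 1 (X ω)))) ∧
      (tauPO P X S1 S0 Y1 Y0 1 0 x
          = condMeanOn P {ω | X ω = x}
              (fun ω =>
                tck10 (X ω)
                  + (phiA1_10 P X Z S Y ω - phiA0_10 P X Z S Y ω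
                      - tck10 (X ω) * gA10 P X Z S ω)
                    / (pZs P X Z S 1 (X ω) - pZs P X Z S 0 (X ω)))) ∧
      (tauPO P X S1 S0 Y1 Y0 1 1 x
          = condMeanOn P {ω | X ω = x}
              (fun ω =>
                tck11 (X ω)
                  + (phiA1_11 P X Z S Y ω - phiA0_11 P X Z S Y ω
                      - tck11 (X ω) * gA11 P X Z S ω)
                    / (pZs P X Z S 0 (X ω)))) := by
  intro x hBx hZx hZSx hstr _ _ hp0 hp1 hp01
  have hB : MeasurableSet {ω | X ω = x} := hXm (measurableSet_singleton x)
  have hV : Measurable fun ω => (Y1 ω, Y0 ω, S1 ω, S0 ω) := by fun_prop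
  obtain ⟨hY1B, hμ1⟩ := muZS_eq_condMeanOn_of_condIndep (S := S) (Y := Y) hV measurable_fst
    measurable_snd.snd.fst rfl rfl hB (hZm (measurableSet_singleton 1)) hBx (hZx 1 (.inr rfl))
    (fun A hA => hA2 x A hA 1) (fun ω hz => by simp [hA1 ω, hz]) hYi
  obtain ⟨hY0B, hμ0⟩ := muZS_eq_condMeanOn_of_condIndep (S := S) (Y := Y) hV measurable_snd.fst
    measurable_snd.snd.snd rfl rfl hB (hZm (measurableSet_singleton 0)) hBx (hZx 0 (.inl rfl))
    (fun A hA => hA2 x A hA 0) (fun ω hz => by simp [hA1 ω, hz]) hYi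
  obtain ⟨hτ00, hτ10, hτ11⟩ := tauPO_eq_muZS hS1m hS0m hB hS1b hS0b hA3
    (hstr 1 1 (.inl ⟨rfl, rfl⟩)) (hstr 0 0 (.inr (.inr ⟨rfl, rfl⟩))) (hA4 x hBx).1
    (hA4 x hBx).2 hY1B hY0B hμ1 hμ0
  have h1 := psiMeans_of_binary hB hBx hZm hSm hS01 hYi fun s hs => hZSx 1 s (.inr rfl) hs
  have h0 := psiMeans_of_binary hB hBx hZm hSm hS01 hYi fun s hs => hZSx 0 s (.inl rfl) hs
  have hp1' : pZs P X Z S 1 x ≠ 0 := (hp0.trans hp01).ne'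
  have hp0' : pZs P X Z S 0 x ≠ 1 := (hp01.trans hp1).ne
  refine ⟨?_, ?_, ?_⟩
  · rw [hτ00]
    exact (condMeanOn_one_step (e := fun x => 1 - pZs P X Z S 1 x) hB hBx
      (h1.hasCondMeanOn_phiA1_00_sub_phiA0_00 h0 hB hp0') h1.psiOneSubS (sub_ne_zero.2 hp1.ne')).symm
  · rw [hτ10]
    exact (condMeanOn_one_step (e := fun x => pZs P X Z S 1 x - pZs P X Z S 0 x) hB hBx
      (h1.hasCondMeanOn_phiA1_10_sub_phiA0_10 h0 hB hp0' hp1') (h1.psiS.sub h0.psiS)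
      (sub_ne_zero.2 hp01.ne')).symm
  · rw [hτ11]
    exact (condMeanOn_one_step (e := fun x => pZs P X Z S 0 x) hB hBx
      (h1.hasCondMeanOn_phiA1_11_sub_phiA0_11 h0 hB hp1') h0.psiS hp0.ne').symm

/-- One-step identification of the CPCEs: for any measurable preliminary function,
updating it by the EIF residual recovers the true CPCE. -/
theorem cpce_one_step_identification
    {Ω : Type*} [MeasurableSpace Ω] (P : Measure Ω) [IsProbabilityMeasure P]
    {d : ℕ} (X : Ω → Fin d → ℝ) (Y Z S Y1 Y0 S1 S0 : Ω → ℝ)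
    (hXm : Measurable X) (hYm : Measurable Y) (hZm : Measurable Z) (hSm : Measurable S)
    (hY1m : Measurable Y1) (hY0m : Measurable Y0) (hS1m : Measurable S1) (hS0m : Measurable S0)
    (hZ01 : ∀ ω, Z ω = 0 ∨ Z ω = 1) (hS01 : ∀ ω, S ω = 0 ∨ S ω = 1)
    (hS1b : ∀ ω, S1 ω = 0 ∨ S1 ω = 1) (hS0b : ∀ ω, S0 ω = 0 ∨ S0 ω = 1)
    -- Assumption 1 (consistency)
    (hA1 : ∀ ω, Y ω = Y1 ω * Z ω + Y0 ω * (1 - Z ω) ∧ S ω = S1 ω * Z ω + S0 ω * (1 - Z ω))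
    -- Assumption 2 (treatment ignorability): (Y(1),Y(0),S(1),S(0)) ⟂ Z | X
    (hA2 : ∀ (x : Fin d → ℝ) (A : Set (ℝ × ℝ × ℝ × ℝ)), MeasurableSet A → ∀ z : ℝ,
      P ({ω | (Y1 ω, Y0 ω, S1 ω, S0 ω) ∈ A} ∩ {ω | Z ω = z} ∩ {ω | X ω = x})
          * P {ω | X ω = x}
        = P ({ω | (Y1 ω, Y0 ω, S1 ω, S0 ω) ∈ A} ∩ {ω | X ω = x})
            * P ({ω | Z ω = z} ∩ {ω | X ω = x}))
    -- Assumption 3 (monotonicity)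
    (hA3 : ∀ᵐ ω ∂P, S0 ω ≤ S1 ω)
    -- Assumption 4 (principal ignorability)
    (hA4 : ∀ x : Fin d → ℝ, P {ω | X ω = x} ≠ 0 →
      condMeanOn P {ω | S1 ω = 1 ∧ S0 ω = 1 ∧ X ω = x} Y1
          = condMeanOn P {ω | S1 ω = 1 ∧ S0 ω = 0 ∧ X ω = x} Y1 ∧
        condMeanOn P {ω | S1 ω = 0 ∧ S0 ω = 0 ∧ X ω = x} Y0
          = condMeanOn P {ω | S1 ω = 1 ∧ S0 ω = 0 ∧ X ω = x} Y0)
    (hYi : Integrable Y P)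
    (tck00 tck10 tck11 : (Fin d → ℝ) → ℝ)
    (htck00 : Measurable tck00) (htck10 : Measurable tck10) (htck11 : Measurable tck11) :
    ∀ x : Fin d → ℝ,
      P {ω | X ω = x} ≠ 0 →
      (∀ z : ℝ, z = 0 ∨ z = 1 → P {ω | Z ω = z ∧ X ω = x} ≠ 0) →
      (∀ z s : ℝ, (z = 0 ∨ z = 1) → (s = 0 ∨ s = 1) →
        P {ω | Z ω = z ∧ S ω = s ∧ X ω = x} ≠ 0) →
      (∀ a b : ℝ, ((a = 1 ∧ b = 1) ∨ (a = 1 ∧ b = 0) ∨ (a = 0 ∧ b = 0)) →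
        P {ω | S1 ω = a ∧ S0 ω = b ∧ X ω = x} ≠ 0) →
      0 < piX P X Z x → piX P X Z x < 1 →
      0 < pZs P X Z S 0 x → pZs P X Z S 1 x < 1 →
      pZs P X Z S 0 x < pZs P X Z S 1 x →
      (tauPO P X S1 S0 Y1 Y0 0 0 x
          = condMeanOn P {ω | X ω = x}
              (fun ω =>
                tck00 (X ω)
                  + (phiA1_00 P X Z S Y ω - phiA0_00 P X Z S Y ω
                      - tck00 (X ω) * gA00 P X Z S ω)
                    / (1 - pZs P X Z S 1 (X ω)))) ∧
      (tauPO P X S1 S0 Y1 Y0 1 0 x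
          = condMeanOn P {ω | X ω = x}
              (fun ω =>
                tck10 (X ω)
                  + (phiA1_10 P X Z S Y ω - phiA0_10 P X Z S Y ω
                      - tck10 (X ω) * gA10 P X Z S ω)
                    / (pZs P X Z S 1 (X ω) - pZs P X Z S 0 (X ω)))) ∧
      (tauPO P X S1 S0 Y1 Y0 1 1 x
          = condMeanOn P {ω | X ω = x}
              (fun ω =>
                tck11 (X ω)
                  + (phiA1_11 P X Z S Y ω - phiA0_11 P X Z S Y ω
                      - tck11 (X ω) * gA11 P X Z S ω)
                    / (pZs P X Z S 0 (X ω)))) :=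
  cpce_one_step_identification_general P X Y Z S Y1 Y0 S1 S0 hXm hZm hSm hY1m hY0m hS1m hS0m hS01
    hS1b hS0b hA1 hA2 hA3 hA4 hYi tck00 tck10 tck11
end
end
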